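/- arXiv:math/0209056 — 2 statements merged into one kernel-verified Lean document; each statement's English description precedes it below -/
import Mathlib

section
/- Let H be a free abelian group of rank 2g with a ℤ-valued alternating (symplectic) pairing, let γ ∈ H, and let PD(γ) ∈ H* be the functional x ↦ (pairing of γ with x), so that PD(γ)(γ) = 0. On X(g,d) = ⊕_{i=0}^{d} Λ^{2g−i} H* ⊗ (ℤ[U]/U^{d−i+1}) define D_γ(ω ⊗ U^j) = ι_γ ω ⊗ U^j + PD(γ) ∧ ω ⊗ U^{j+1}, where ι_γ denotes contraction of Λ*H* with γ ∈ H, and where terms landing outside the truncations are declared zero via the natural maps. Then D_γ is well defined on X(g,d) and satisfies D_γ ∘ D_γ = 0, making (X(g,d), D_γ) a chain complex. -/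
open TensorProduct
open scoped Polynomial
open Polynomial (X)

/-!
The exterior algebra is the Clifford algebra of the zero quadratic form, so contraction `ι_γ` with
`γ ∈ H = (H*)*` is `CliffordAlgebra.contractLeft`; it lowers the exterior degree by one, while
`PD(γ) ∧ ·` raises it by one and is paired with multiplication by `U = X`. Hence each generator
`x ⊗ U^j` of the truncation submodule is sent to a sum of two generators. For `D_γ² = 0` expand the
square: `ι_γ² = 0`, `(PD(γ) ∧ ·)² = 0`, and the anticommutator of the two pieces is
multiplication by `PD(γ)(γ) = ω(γ, γ) = 0`.
-/

namespace ExteriorAlgebra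

variable {R M : Type*} [CommRing R] [AddCommGroup M] [Module R M]

theorem ι_mul_mem_exteriorPower_succ (v : M) {n : ℕ} {x : ExteriorAlgebra R M}
    (hx : x ∈ ⋀[R]^n M) : ι R v * x ∈ ⋀[R]^(n + 1) M := by
  rw [exteriorPower, pow_succ']
  exact Submodule.mul_mem_mul (LinearMap.mem_range_self _ v) hx

variable (φ : Module.Dual R M)

theorem contractLeft_eq_zero_of_mem_exteriorPower_zero {x : ExteriorAlgebra R M}
    (hx : x ∈ ⋀[R]^0 M) : CliffordAlgebra.contractLeft (Q := 0) φ x = 0 := by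
  rw [exteriorPower, pow_zero, Submodule.mem_one] at hx
  obtain ⟨r, rfl⟩ := hx
  exact CliffordAlgebra.contractLeft_algebraMap 0 φ r

theorem contractLeft_mem_exteriorPower_of_mem_succ {n : ℕ} {x : ExteriorAlgebra R M}
    (hx : x ∈ ⋀[R]^(n + 1) M) : CliffordAlgebra.contractLeft (Q := 0) φ x ∈ ⋀[R]^n M := by
  rw [exteriorPower, pow_succ'] at hx
  induction hx using Submodule.mul_induction_on' with
  | mem_mul_mem a ha y hy =>
    obtain ⟨v, rfl⟩ := ha
    rw [CliffordAlgebra.contractLeft_ι_mul]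
    refine sub_mem (Submodule.smul_mem _ _ hy) ?_
    cases n with
    | zero =>
      rw [contractLeft_eq_zero_of_mem_exteriorPower_zero φ hy, mul_zero]
      exact zero_mem _
    | succ k =>
      exact ι_mul_mem_exteriorPower_succ v (contractLeft_mem_exteriorPower_of_mem_succ hy)
  | add y z _ _ hy hz => simpa only [map_add] using add_mem hy hz

theorem contractLeft_mem_exteriorPower_pred {n : ℕ} {x : ExteriorAlgebra R M}
    (hx : x ∈ ⋀[R]^n M) : CliffordAlgebra.contractLeft (Q := 0) φ x ∈ ⋀[R]^(n - 1) M := by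
  cases n with
  | zero => simpa only [contractLeft_eq_zero_of_mem_exteriorPower_zero φ hx] using zero_mem _
  | succ k => exact contractLeft_mem_exteriorPower_of_mem_succ φ hx

theorem contractLeft_ι_mul_add_ι_mul_contractLeft (v : M) (x : ExteriorAlgebra R M) :
    CliffordAlgebra.contractLeft (Q := 0) φ (ι R v * x)
      + ι R v * CliffordAlgebra.contractLeft (Q := 0) φ x = φ v • x := by
  rw [CliffordAlgebra.contractLeft_ι_mul, sub_add_cancel]

end ExteriorAlgebra

theorem TensorProduct.map_id_add_map_comp_self_eq_zero {R M P : Type*} [CommRing R]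
    [AddCommGroup M] [Module R M] [AddCommGroup P] [Module R P]
    {A B : M →ₗ[R] M} (f : P →ₗ[R] P) (hA : A ∘ₗ A = 0) (hB : B ∘ₗ B = 0)
    (hAB : A ∘ₗ B + B ∘ₗ A = 0) :
    (map A LinearMap.id + map B f) ∘ₗ (map A LinearMap.id + map B f) = 0 := by
  have expand : (map A LinearMap.id + map B f) ∘ₗ (map A LinearMap.id + map B f)
      = map (A ∘ₗ A) LinearMap.id + map (A ∘ₗ B + B ∘ₗ A) f + map (B ∘ₗ B) (f ∘ₗ f) := by
    simp only [LinearMap.add_comp, LinearMap.comp_add, ← map_comp, map_add_left,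
      LinearMap.comp_id, LinearMap.id_comp]
    abel
  rw [expand, hA, hB, hAB]
  simp only [map_zero_left, add_zero]

noncomputable section GammaDifferential

open ExteriorAlgebra (ι ι_mul_mem_exteriorPower_succ contractLeft_mem_exteriorPower_pred
  contractLeft_ι_mul_add_ι_mul_contractLeft)

variable (R M : Type*) [CommRing R] [AddCommGroup M] [Module R M]

/-- `X(g,d)` is the quotient of `Λ*H* ⊗ ℤ[U]` by `truncation ℤ H* d (2g)`. -/
def truncation (a b : ℕ) : Submodule R (ExteriorAlgebra R M ⊗[R] R[X]) :=
  Submodule.span R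
    {z | ∃ n j : ℕ, a + n < b + j ∧ ∃ x ∈ ⋀[R]^n M, z = x ⊗ₜ[R] ((X : R[X]) ^ j)}

variable {R M}

def gammaDifferential (φ : Module.Dual R M) (v : M) :
    ExteriorAlgebra R M ⊗[R] R[X] →ₗ[R] ExteriorAlgebra R M ⊗[R] R[X] :=
  map (CliffordAlgebra.contractLeft (Q := 0) φ) LinearMap.id
    + map (LinearMap.mulLeft R (ι R v)) (LinearMap.mulLeft R X)

variable (φ : Module.Dual R M) (v : M)

theorem gammaDifferential_tmul_X_pow (x : ExteriorAlgebra R M) (j : ℕ) :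
    gammaDifferential φ v (x ⊗ₜ ((X : R[X]) ^ j))
      = CliffordAlgebra.contractLeft (Q := 0) φ x ⊗ₜ (X ^ j) + (ι R v * x) ⊗ₜ (X ^ (j + 1)) := by
  simp only [gammaDifferential, LinearMap.add_apply, map_tmul, LinearMap.id_apply,
    LinearMap.mulLeft_apply, pow_succ']

theorem truncation_le_comap_gammaDifferential (a b : ℕ) :
    truncation R M a b ≤ (truncation R M a b).comap (gammaDifferential φ v) := by
  refine Submodule.span_le.mpr ?_
  rintro _ ⟨n, j, hlt, x, hx, rfl⟩
  rw [SetLike.mem_coe, Submodule.mem_comap, gammaDifferential_tmul_X_pow]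
  refine add_mem (Submodule.subset_span ⟨n - 1, j, by omega, _, ?_, rfl⟩)
    (Submodule.subset_span ⟨n + 1, j + 1, by omega, _, ?_, rfl⟩)
  · exact contractLeft_mem_exteriorPower_pred φ hx
  · exact ι_mul_mem_exteriorPower_succ v hx

theorem gammaDifferential_comp_self (hφv : φ v = 0) :
    gammaDifferential φ v ∘ₗ gammaDifferential φ v = 0 := by
  refine map_id_add_map_comp_self_eq_zero _ ?_ ?_ ?_
  · exact LinearMap.ext fun x ↦ CliffordAlgebra.contractLeft_contractLeft φ x
  · rw [← LinearMap.mulLeft_mul, ExteriorAlgebra.ι_sq_zero, LinearMap.mulLeft_zero_eq_zero]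
  · refine LinearMap.ext fun x ↦ ?_
    simpa only [LinearMap.add_apply, LinearMap.comp_apply, LinearMap.mulLeft_apply,
      LinearMap.zero_apply, hφv, zero_smul] using contractLeft_ι_mul_add_ι_mul_contractLeft φ v x

end GammaDifferential

/-- The differential `D_γ(ω ⊗ U^j) = ι_γ ω ⊗ U^j + PD(γ) ∧ ω ⊗ U^{j+1}` on
`Λ*H* ⊗ ℤ[U]` (with `H` free of rank `2g`, `PD(γ) = ω(γ,·)` for an alternating
pairing `ω`, so `PD(γ)(γ) = 0`) preserves the truncation submodule `N` defining
`X(g,d) = (Λ*H* ⊗ ℤ[U])/N` — i.e. `D_γ` is well defined on `X(g,d)` — and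
satisfies `D_γ ∘ D_γ = 0`, so `(X(g,d), D_γ)` is a chain complex.
Here `N` is spanned by the elements `x ⊗ U^j` with `x ∈ Λ^n H*` and `j > d − (2g − n)`,
i.e. `d + n < 2g + j`, which are declared zero in `X(g,d)`. -/
theorem D_gamma_wellDefined_and_squares_to_zero (g d : ℕ)
    (ω : (Fin (2 * g) → ℤ) →ₗ[ℤ] (Fin (2 * g) → ℤ) →ₗ[ℤ] ℤ)
    (halt : ∀ x, ω x x = 0)
    (γ : Fin (2 * g) → ℤ)
    (D : (ExteriorAlgebra ℤ (Module.Dual ℤ (Fin (2 * g) → ℤ)) ⊗[ℤ] Polynomial ℤ) →ₗ[ℤ]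
        (ExteriorAlgebra ℤ (Module.Dual ℤ (Fin (2 * g) → ℤ)) ⊗[ℤ] Polynomial ℤ))
    (hD : D = TensorProduct.map
          (CliffordAlgebra.contractLeft
            (Q := (0 : QuadraticForm ℤ (Module.Dual ℤ (Fin (2 * g) → ℤ))))
            (Module.Dual.eval ℤ (Fin (2 * g) → ℤ) γ)) LinearMap.id
        + TensorProduct.map (LinearMap.mulLeft ℤ (ExteriorAlgebra.ι ℤ (ω γ)))
            (LinearMap.mulLeft ℤ (Polynomial.X : Polynomial ℤ)))
    (N : Submodule ℤ
        (ExteriorAlgebra ℤ (Module.Dual ℤ (Fin (2 * g) → ℤ)) ⊗[ℤ] Polynomial ℤ))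
    (hN : N = Submodule.span ℤ
        {z | ∃ n j : ℕ, d + n < 2 * g + j ∧
          ∃ x ∈ ⋀[ℤ]^n (Module.Dual ℤ (Fin (2 * g) → ℤ)),
            z = x ⊗ₜ[ℤ] ((Polynomial.X : Polynomial ℤ) ^ j)}) :
    (∀ z ∈ N, D z ∈ N) ∧ D ∘ₗ D = 0 := by
  have hD' : D = gammaDifferential (Module.Dual.eval ℤ _ γ) (ω γ) := hD
  have hN' : N = truncation ℤ _ d (2 * g) := hN
  subst hD' hN'
  exact ⟨truncation_le_comap_gammaDifferential _ _ d (2 * g),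
    gammaDifferential_comp_self _ _ (halt γ)⟩
end

section
/- Let L be a finite set of 'components' and let P be a set of n−1 unordered pairs of distinct elements of L (a multigraph with n = |L| vertices and n−1 edges) such that the graph (L, P) is connected. Then (L, P) is a tree, and moreover for every vertex ordering L = {K₁, …, Kₙ} arising from transforming P by slides into a 'linear chain', the linear chain has edge set {{Kᵢ, Kᵢ₊₁} : 1 ≤ i ≤ n−1}. Concretely: every connected graph on n vertices with n−1 edges admits a sequence of slides (replacing an edge {u,w} by {v,w} when {u,v} is also present) transforming it into a path graph. -/
/-!
A connected graph on `n` vertices with `n - 1` edges is a tree by edge counting. For the slides,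
grow a chain (a path, listed by its vertices) in `G`. By connectivity some vertex `w` off the chain
is adjacent to a chain vertex `u`; sliding the edge `{u, w}` along the chain one step at a time
makes `w` adjacent to the last vertex, so the chain grows by `w`. Slides preserve connectivity and
never increase the number of edges, so once the chain spans all vertices, the path it traces is a
connected spanning subgraph, with at least `n - 1` edges, of a graph with at most `n - 1` edges:
the two coincide.
-/

/-- A *slide*: replace an edge `{u,w}` by `{v,w}` when `{u,v}` is also an edge. -/
def Slide {V : Type*} (G G' : SimpleGraph V) : Prop :=
  ∃ u v w : V, v ≠ w ∧ s(u, v) ∈ G.edgeSet ∧ s(u, w) ∈ G.edgeSet ∧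
    G'.edgeSet = (G.edgeSet \ {s(u, w)}) ∪ {s(v, w)}

open SimpleGraph Relation

section

variable {V : Type*}

namespace SimpleGraph

lemma Connected.exists_adj_of_mem_of_notMem {G : SimpleGraph V} (hG : G.Connected)
    {s : Set V} {a b : V} (ha : a ∈ s) (hb : b ∉ s) : ∃ u ∈ s, ∃ w ∉ s, G.Adj u w := by
  obtain ⟨p⟩ := hG a b
  obtain ⟨d, -, hd₁, hd₂⟩ := p.exists_boundary_dart s ha hb
  exact ⟨d.fst, hd₁, d.snd, hd₂, d.adj⟩

lemma Connected.eq_of_le_of_ncard_edgeSet_le [Finite V] {H G : SimpleGraph V}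
    (hH : H.Connected) (hle : H ≤ G) (hcard : G.edgeSet.ncard ≤ Nat.card V - 1) : H = G := by
  have hH_card := hH.card_vert_le_card_edgeSet_add_one
  rw [Nat.card_coe_set_eq] at hH_card
  exact edgeSet_injective (Set.eq_of_subset_of_ncard_le (edgeSet_mono hle) (by omega))

end SimpleGraph

namespace Slide

variable {G G' : SimpleGraph V}

lemma of_adj {u v w : V} (huv : G.Adj u v) (huw : G.Adj u w) (hvw : v ≠ w) :
    Slide G (G.deleteEdges {s(u, w)} ⊔ edge v w) :=
  ⟨u, v, w, hvw, huv, huw, by rw [edgeSet_sup, edgeSet_deleteEdges, edgeSet_edge_of_ne hvw]⟩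

lemma ncard_edgeSet_le [Finite V] (h : Slide G G') : G'.edgeSet.ncard ≤ G.edgeSet.ncard := by
  obtain ⟨u, v, w, -, -, huw, hE⟩ := h
  rw [hE, ← Set.ncard_sdiff_singleton_add_one huw]
  simpa using Set.ncard_union_le (G.edgeSet \ {s(u, w)}) {s(v, w)}

-- The removed edge `{u, w}` survives as the detour `u — v — w`.
lemma reachable_of_adj (h : Slide G G') {a b : V} (hab : G.Adj a b) : G'.Reachable a b := by
  obtain ⟨u, v, w, hvw, huv, huw, hE⟩ := h
  have mem_edgeSet' : ∀ {e}, e ∈ G.edgeSet → e ≠ s(u, w) → e ∈ G'.edgeSet := fun he hne =>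
    hE ▸ Or.inl ⟨he, hne⟩
  by_cases he : s(a, b) = s(u, w)
  · have hdetour : G'.Reachable u w :=
      (Adj.reachable (mem_edgeSet' huv fun h => hvw (Sym2.congr_right.1 h))).trans
        (Adj.reachable (show s(v, w) ∈ G'.edgeSet from hE ▸ Or.inr rfl))
    rcases Sym2.eq_iff.1 he with ⟨rfl, rfl⟩ | ⟨rfl, rfl⟩
    exacts [hdetour, hdetour.symm]
  · exact Adj.reachable (mem_edgeSet' hab he)

lemma reachable (h : Slide G G') {a b : V} (hab : G.Reachable a b) : G'.Reachable a b := by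
  rw [reachable_iff_reflTransGen] at hab ⊢
  exact hab.lift' id fun _ _ h' => (reachable_iff_reflTransGen _ _).1 (h.reachable_of_adj h')

lemma connected_of_reflTransGen (h : ReflTransGen Slide G G') (hG : G.Connected) :
    G'.Connected := by
  induction h with
  | refl => exact hG
  | tail _ hs ih =>
    have := ih.nonempty
    exact ⟨fun a b => hs.reachable (ih.preconnected a b)⟩

lemma ncard_edgeSet_le_of_reflTransGen [Finite V] (h : ReflTransGen Slide G G') :
    G'.edgeSet.ncard ≤ G.edgeSet.ncard := by
  induction h with
  | refl => exact le_rfl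
  | tail _ hs ih => exact hs.ncard_edgeSet_le.trans ih

end Slide

lemma exists_slides_isChain_concat {G : SimpleGraph V} {u w : V} (l₁ l₂ : List V)
    (hw : w ∉ l₁ ++ u :: l₂) (hl : (l₁ ++ u :: l₂).IsChain G.Adj) (huw : G.Adj u w) :
    ∃ G', ReflTransGen Slide G G' ∧ (l₁ ++ u :: l₂ ++ [w]).IsChain G'.Adj := by
  induction l₂ generalizing G l₁ u with
  | nil => exact ⟨G, .refl, hl.append (by simp) (by simpa using huw)⟩
  | cons v l₂ ih =>
    have hvw : v ≠ w := by rintro rfl; simp at hw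
    have huv : G.Adj u v := (List.isChain_cons_cons.1 hl.right_of_append).1
    set G₁ := G.deleteEdges {s(u, w)} ⊔ edge v w
    have hl₁ : ((l₁ ++ [u]) ++ v :: l₂).IsChain G₁.Adj := by
      refine List.IsChain.imp_of_mem_imp (fun a b ha hb hab => ?_) (by simpa using hl)
      have haw : a ≠ w := by rintro rfl; simp_all
      have hbw : b ≠ w := by rintro rfl; simp_all
      simp [G₁, hab, haw, hbw]
    obtain ⟨G', hs, hG'⟩ := ih (l₁ ++ [u]) (by simpa using hw) hl₁ (by simp [G₁, edge_adj, hvw])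
    exact ⟨G', .head (.of_adj huv huw hvw) hs, by simpa using hG'⟩

theorem exists_slides_to_spanning_isChain [Fintype V] {G : SimpleGraph V} (hG : G.Connected)
    (l : List V) (hl : l ≠ []) (hnd : l.Nodup) (hc : l.IsChain G.Adj) :
    ∃ (G' : SimpleGraph V) (l' : List V),
      ReflTransGen Slide G G' ∧ l'.Nodup ∧ (∀ x, x ∈ l') ∧ l'.IsChain G'.Adj := by
  by_cases hspan : ∀ x, x ∈ l
  · exact ⟨G, l, .refl, hnd, hspan, hc⟩
  push Not at hspan
  obtain ⟨b, hb⟩ := hspan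
  obtain ⟨a, ha⟩ := List.exists_mem_of_ne_nil l hl
  obtain ⟨u, hu, w, hw, huw⟩ := hG.exists_adj_of_mem_of_notMem (s := {x | x ∈ l}) ha hb
  obtain ⟨G₁, hs₁, hc₁⟩ : ∃ G₁, ReflTransGen Slide G G₁ ∧ (l ++ [w]).IsChain G₁.Adj := by
    obtain ⟨l₁, l₂, rfl⟩ := List.append_of_mem hu
    exact exists_slides_isChain_concat l₁ l₂ hw hc huw
  have hnd₁ : (l ++ [w]).Nodup := by
    simpa [List.nodup_append] using ⟨hnd, fun a ha h => hw (h ▸ ha)⟩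
  have hlen := hnd₁.length_le_card
  obtain ⟨G', l', hs, h'⟩ := exists_slides_to_spanning_isChain
    (Slide.connected_of_reflTransGen hs₁ hG) (l ++ [w]) (by simp) hnd₁ hc₁
  exact ⟨G', l', hs₁.trans hs, h'⟩
termination_by Fintype.card V - l.length
decreasing_by simp at hlen ⊢; omega

lemma nonempty_iso_pathGraph_of_isChain [Fintype V] [Nonempty V] {G : SimpleGraph V}
    {l : List V} (hnd : l.Nodup) (hspan : ∀ x, x ∈ l) (hc : l.IsChain G.Adj)
    (hcard : G.edgeSet.ncard ≤ Fintype.card V - 1) :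
    Nonempty (G ≃g pathGraph (Fintype.card V)) := by
  classical
  let e : Fin l.length ≃ V := hnd.getEquivOfForallMemList l hspan
  have hlen : l.length = Fintype.card V := by simpa using Fintype.card_congr e
  have : Nonempty (Fin l.length) := e.nonempty
  have hle : (pathGraph l.length).map e.toEmbedding ≤ G := by
    rw [map_le_iff_le_comap]
    rintro ⟨i, hi⟩ ⟨j, hj⟩ hij
    simp only [comap_adj, Equiv.coe_toEmbedding, e, List.Nodup.getEquivOfForallMemList_apply,
      List.get_eq_getElem]
    rcases pathGraph_adj.1 hij with rfl | rfl
    exacts [hc.getElem i hj, (hc.getElem j hi).symm]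
  have hconn : ((pathGraph l.length).map e.toEmbedding).Connected :=
    (Iso.map e _).connected_iff.1 ⟨pathGraph_preconnected _⟩
  rw [← hconn.eq_of_le_of_ncard_edgeSet_le hle (by simpa using hcard), ← hlen]
  exact ⟨(Iso.map e _).symm⟩

end

/-- A connected graph on `n` vertices with `n − 1` edges is a tree, and it admits
a finite sequence of slides transforming it into a path graph (a linear chain, whose
edges are exactly the consecutive pairs of some ordering of the vertices). -/
theorem connected_graph_is_tree_slides_to_path
    {V : Type*} [Fintype V] (G : SimpleGraph V)
    (hconn : G.Connected) (hcard : G.edgeSet.ncard = Fintype.card V - 1) :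
    G.IsTree ∧
    ∃ P : SimpleGraph V, Relation.ReflTransGen Slide G P ∧
      Nonempty (P ≃g SimpleGraph.pathGraph (Fintype.card V)) := by
  have : Nonempty V := hconn.nonempty
  have hT : G.IsTree := isTree_iff_connected_and_card.2 ⟨hconn, by
    rw [Nat.card_coe_set_eq, hcard, Nat.card_eq_fintype_card]
    have := Fintype.card_pos (α := V)
    omega⟩
  obtain ⟨P, l, hs, hnd, hspan, hc⟩ := exists_slides_to_spanning_isChain hconn
    [Classical.arbitrary V] (by simp) (by simp) (by simp)
  exact ⟨hT, P, hs, nonempty_iso_pathGraph_of_isChain hnd hspan hc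
    ((Slide.ncard_edgeSet_le_of_reflTransGen hs).trans hcard.le)⟩
end
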